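/- arXiv:2108.05847 — 3 statements merged into one kernel-verified Lean document; each statement's English description precedes it below -/
import Mathlib

section
/- Let g be a finite-dimensional complex semisimple Lie algebra with Cartan matrix A = (a_ij), Chevalley generators e_1, ..., e_n, and suppose indices i_1, ..., i_l and j_1, ..., j_l satisfy: a_{i_r, j} = 0 for all j not in {i_r, j_r}, a_{i_r, j_r} = -1, and the i_r are pairwise distinct and pairwise non-adjacent (a_{i_r, i_s} = 0 for r ≠ s). Then e = e_{i_1} + ... + e_{i_l} satisfies (ad e)^3 = 0 over any field of characteristic 3, i.e. (ad e)^3 takes values in 3·g for the integral form. -/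
/-!
Write `e = ∑ r, E (i r)`. The summands pairwise commute (non-adjacent simple roots), so in
characteristic 3 we have `(ad e)^3 = ∑ r, (ad E (i r))^3`. Each `(ad E (i r))^3` kills every
Chevalley generator: on `E b` by the Serre relations, since `A (i r) b ≥ -1`, and on `H b`, `F b`
because `⁅H b, E (i r)⁆` is a multiple of `E (i r)`. In characteristic `p` the `p`-th power of a
derivation is again a derivation, so `(ad e)^3` vanishes on the Lie algebra generated by the
generators, which is everything.
-/

open LieAlgebra

namespace LieDerivation

variable {R L : Type*} [CommRing R] [LieRing L] [LieAlgebra R L] (p : ℕ) [Fact p.Prime]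
  [CharP R p]

theorem iterate_charP_apply_lie (D : LieDerivation R L L) (a b : L) :
    D^[p] ⁅a, b⁆ = ⁅a, D^[p] b⁆ + ⁅D^[p] a, b⁆ := by
  have hp : p.Prime := Fact.out
  rw [iterate_apply_lie', Finset.sum_eq_add_of_mem 0 p (by simp) (by simp) hp.ne_zero.symm]
  · simp [add_comm]
  · intro k hk ⟨hk0, hkp⟩
    obtain ⟨c, hc⟩ := hp.dvd_choose_self hk0
      (lt_of_le_of_ne (Nat.lt_succ_iff.mp (Finset.mem_range.mp hk)) hkp)
    rw [hc, mul_nsmul', ← Nat.cast_smul_eq_nsmul R, CharP.cast_eq_zero, zero_smul]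

def powCharP (D : LieDerivation R L L) : LieDerivation R L L where
  toLinearMap := (D : Module.End R L) ^ p
  leibniz' a b := by
    simp only [Module.End.pow_apply, coeFn_coe, iterate_charP_apply_lie, sub_eq_add_neg, lie_skew]

@[simp]
theorem coe_powCharP (D : LieDerivation R L L) :
    (D.powCharP p : Module.End R L) = (D : Module.End R L) ^ p := rfl

@[simp]
theorem powCharP_apply (D : LieDerivation R L L) (a : L) :
    D.powCharP p a = ((D : Module.End R L) ^ p) a := rfl

end LieDerivation

theorem Finset.sum_pow_char_of_commute {ι R : Type*} [Semiring R] (p : ℕ) [Fact p.Prime]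
    [CharP R p] (s : Finset ι) (f : ι → R) (h : ∀ i ∈ s, ∀ j ∈ s, Commute (f i) (f j)) :
    (∑ i ∈ s, f i) ^ p = ∑ i ∈ s, f i ^ p := by
  induction s using Finset.cons_induction with
  | empty => simp [(Fact.out : p.Prime).ne_zero]
  | cons a s ha ih =>
    simp only [Finset.mem_cons, forall_eq_or_imp] at h
    rw [Finset.sum_cons, Finset.sum_cons, ← ih fun i hi j hj => h.2 i hi |>.2 j hj,
      add_pow_char_of_commute]
    exact Commute.sum_right _ _ _ fun j hj => h.1.2 j hj

namespace LieAlgebra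

section CharP

variable (p : ℕ) [Fact p.Prime]

theorem ad_sum_pow_char_of_lie_eq_zero {K L ι : Type*} [Field K] [CharP K p] [LieRing L]
    [LieAlgebra K L] (s : Finset ι) (x : ι → L) (h : ∀ i ∈ s, ∀ j ∈ s, ⁅x i, x j⁆ = 0) :
    ad K L (∑ i ∈ s, x i) ^ p = ∑ i ∈ s, ad K L (x i) ^ p := by
  nontriviality Module.End K L
  have : CharP (Module.End K L) p := charP_of_injective_algebraMap' K p
  rw [map_sum]
  refine Finset.sum_pow_char_of_commute p s _ fun i hi j hj => ?_
  ext z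
  simp [leibniz_lie (x i) (x j) z, h i hi j hj]

theorem ad_pow_charP_eq_zero_of_lieSpan_eq_top {R L : Type*} [CommRing R] [CharP R p]
    [LieRing L] [LieAlgebra R L] {s : Set L} (hs : LieSubalgebra.lieSpan R L s = ⊤) (x : L)
    (h : ∀ y ∈ s, (ad R L x ^ p) y = 0) :
    ad R L x ^ p = 0 := by
  have h0 : (LieDerivation.ad R L x).powCharP p = 0 :=
    LieDerivation.ext_of_lieSpan_eq_top s hs fun y hy => by simpa using h y hy
  simpa using congrArg (fun D : LieDerivation R L L => (D : Module.End R L)) h0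

end CharP

variable {R L : Type*} [CommRing R] [LieRing L] [LieAlgebra R L]

theorem ad_pow_two_apply_eq_zero_of_lie_eq_smul {x h : L} {c : R} (hx : ⁅h, x⁆ = c • x) :
    (ad R L x ^ 2) h = 0 := by
  have hxh : ad R L x h = -(c • x) := by rw [ad_apply, ← lie_skew, hx]
  simp [pow_two, hxh]

variable {ι : Type*} {A : ι → ι → ℤ} {E F H : ι → L}

theorem ad_pow_three_apply_eq_zero_of_lie_eq_ite [DecidableEq ι]
    (hEF : ∀ a b, ⁅E a, F b⁆ = if a = b then H a else 0)
    (hHE : ∀ a b, ⁅H a, E b⁆ = ((A a b : ℤ) : R) • E b) (a b : ι) :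
    (ad R L (E a) ^ 3) (F b) = 0 := by
  rw [pow_succ, Module.End.mul_apply, ad_apply, hEF]
  split_ifs
  · exact ad_pow_two_apply_eq_zero_of_lie_eq_smul (hHE a a)
  · exact map_zero _

theorem ad_pow_two_apply_eq_zero_of_serre
    (hserre : ∀ a b, a ≠ b → (ad R L (E a) ^ (1 - A a b).toNat) (E b) = 0)
    {a : ι} (ha : ∀ b, b ≠ a → -1 ≤ A a b) (b : ι) :
    (ad R L (E a) ^ 2) (E b) = 0 := by
  rcases eq_or_ne b a with rfl | hb
  · rw [pow_succ, Module.End.mul_apply, ad_apply, lie_self, map_zero]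
  · exact Module.End.pow_map_zero_of_le (by have := ha b hb; omega) (hserre a b hb.symm)

end LieAlgebra

theorem stmt5_general {K L : Type*} [Field K] [CharP K 3] [LieRing L] [LieAlgebra K L]
    {n l : ℕ} (A : Fin n → Fin n → ℤ) (E F H : Fin n → L) (i j : Fin l → Fin n)
    (hEF : ∀ a b, ⁅E a, F b⁆ = if a = b then H a else 0)
    (hHE : ∀ a b, ⁅H a, E b⁆ = ((A a b : ℤ) : K) • E b)
    (hserreE : ∀ a b, a ≠ b → ((ad K L (E a)) ^ (1 - A a b).toNat) (E b) = 0)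
    (hgen : LieSubalgebra.lieSpan K L (Set.range E ∪ Set.range F ∪ Set.range H) = ⊤)
    (hAij : ∀ r, A (i r) (j r) = -1)
    (hA0 : ∀ r b, b ≠ i r → b ≠ j r → A (i r) b = 0)
    (hnonadj : ∀ r s, r ≠ s → A (i r) (i s) = 0) :
    (ad K L (∑ r, E (i r))) ^ 3 = 0 := by
  have hcomm : ∀ r s, ⁅E (i r), E (i s)⁆ = 0 := by
    intro r s
    by_cases hrs : i r = i s
    · rw [hrs, lie_self]
    · simpa [hnonadj r s (ne_of_apply_ne i hrs)] using hserreE _ _ hrs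
  have hE : ∀ r b, (ad K L (E (i r)) ^ 2) (E b) = 0 := by
    refine fun r => ad_pow_two_apply_eq_zero_of_serre hserreE fun b hb => ?_
    by_cases hbj : b = j r
    · rw [hbj, hAij]
    · rw [hA0 r b hb hbj]; decide
  refine ad_pow_charP_eq_zero_of_lieSpan_eq_top 3 hgen _ ?_
  rw [ad_sum_pow_char_of_lie_eq_zero 3 _ _ fun r _ s _ => hcomm r s]
  rintro y ((⟨b, rfl⟩ | ⟨b, rfl⟩) | ⟨b, rfl⟩) <;>
    refine (LinearMap.sum_apply _ _ _).trans (Finset.sum_eq_zero fun r _ => ?_)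
  · exact Module.End.pow_map_zero_of_le (by norm_num) (hE r b)
  · exact ad_pow_three_apply_eq_zero_of_lie_eq_ite hEF hHE (i r) b
  · exact Module.End.pow_map_zero_of_le (by norm_num)
      (ad_pow_two_apply_eq_zero_of_lie_eq_smul (hHE b (i r)))

/-- Let `g` be a Lie algebra with Cartan matrix `A`, Chevalley generators `E i, F i, H i`
satisfying the contragredient relations and the Serre relations, over a field of
characteristic 3.  If indices `i_1, ..., i_l` and `j_1, ..., j_l` satisfy
`A (i r) j = 0` for `j ∉ {i r, j r}`, `A (i r) (j r) = -1`, and the `i r` are pairwise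
distinct and pairwise non-adjacent, then `e = e_{i_1} + ... + e_{i_l}` satisfies
`(ad e)^3 = 0`. -/
theorem stmt5 {K L : Type*} [Field K] [CharP K 3] [LieRing L] [LieAlgebra K L]
    {n l : ℕ} (A : Fin n → Fin n → ℤ) (E F H : Fin n → L) (i j : Fin l → Fin n)
    (hEF : ∀ a b, ⁅E a, F b⁆ = if a = b then H a else 0)
    (hHE : ∀ a b, ⁅H a, E b⁆ = ((A a b : ℤ) : K) • E b)
    (hHF : ∀ a b, ⁅H a, F b⁆ = -(((A a b : ℤ) : K) • F b))
    (hHH : ∀ a b, ⁅H a, H b⁆ = 0)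
    (hserreE : ∀ a b, a ≠ b → ((ad K L (E a)) ^ (1 - A a b).toNat) (E b) = 0)
    (hserreF : ∀ a b, a ≠ b → ((ad K L (F a)) ^ (1 - A a b).toNat) (F b) = 0)
    (hgen : LieSubalgebra.lieSpan K L (Set.range E ∪ Set.range F ∪ Set.range H) = ⊤)
    (hdiag : ∀ a, A a a = 2)
    (hoff : ∀ a b, a ≠ b → A a b ≤ 0)
    (hzero : ∀ a b, (A a b = 0) ↔ (A b a = 0))
    (hAij : ∀ r, A (i r) (j r) = -1)
    (hA0 : ∀ r b, b ≠ i r → b ≠ j r → A (i r) b = 0)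
    (hinj : Function.Injective i)
    (hnonadj : ∀ r s, r ≠ s → A (i r) (i s) = 0) :
    (ad K L (∑ r, E (i r))) ^ 3 = 0 :=
  stmt5_general A E F H i j hEF hHE hserreE hgen hAij hA0 hnonadj
end

section
/- With the gl_3 decomposition above, the semisimplified bracket on the span of y_1 = [e_{11}], y_2 = [e_{11}+e_{22}+e_{33}] (even) and y_3 = [e_{12} ↦ -e_{13}], y_4 = [e_{31} ↦ e_{21}] (odd) satisfies: [y_1, y_2] = 0, [y_1, y_3] = y_3, [y_1, y_4] = -y_4, and [y_3, y_4] = y_2, where the odd-odd bracket is computed by the rule [x̄, ȳ] = -[x, y'] + [x', y] for Jordan strings x ↦ x' and y ↦ y'. In particular this Lie superalgebra is isomorphic to gl(1|1). -/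
/-- The elementary matrix `e_{ij}` in `gl_3`. -/
noncomputable def Egl {K : Type*} [Field K] (i j : Fin 3) : Matrix (Fin 3) (Fin 3) K :=
  Matrix.single i j 1

/-- Structure constants of the semisimplified bracket on `y_1, ..., y_4`. -/
def gCoef (K : Type*) [Field K] : Fin 4 → Fin 4 → (Fin 4 → K) := fun i j =>
  if i = 0 ∧ j = 2 then Pi.single 2 1
  else if i = 2 ∧ j = 0 then -Pi.single 2 1
  else if i = 0 ∧ j = 3 then -Pi.single 3 1
  else if i = 3 ∧ j = 0 then Pi.single 3 1
  else if i = 2 ∧ j = 3 then Pi.single 1 1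
  else if i = 3 ∧ j = 2 then Pi.single 1 1
  else 0

/-- The bilinear bracket on `K^4` determined by the structure constants `gCoef`. -/
noncomputable def gBracket (K : Type*) [Field K] :
    (Fin 4 → K) →ₗ[K] (Fin 4 → K) →ₗ[K] (Fin 4 → K) :=
  (Pi.basisFun K (Fin 4)).constr K fun i => (Pi.basisFun K (Fin 4)).constr K fun j => gCoef K i j

/-- The odd (off-diagonal) part of a `2 × 2` matrix. -/
def oddPart {K : Type*} [Field K] (M : Matrix (Fin 2) (Fin 2) K) : Matrix (Fin 2) (Fin 2) K :=
  M - Matrix.diagonal fun i => M i i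

/-- The super bracket `[a,b] = ab - (-1)^{|a||b|} ba` of `gl(1|1)`. -/
def glBracket {K : Type*} [Field K] (a b : Matrix (Fin 2) (Fin 2) K) :
    Matrix (Fin 2) (Fin 2) K :=
  a * b - b * a + (2 : K) • (oddPart b * oddPart a)

/-! In `gl₃`, `ad e₁₁` acts by `+1` on `e₁ⱼ` and by `-1` on `eⱼ₁` (`j ≠ 1`), and
`[e₁ⱼ, eⱼ₁] = e₁₁ - eⱼⱼ`; so the odd-odd bracket `-[e₁₂, e₂₁] + [-e₁₃, e₃₁]` equals
`e₂₂ + e₃₃ - 2 e₁₁`, which is the identity because `3 = 0`. The resulting structure constants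
are those of `gl(1|1)` under `y₁ ↦ e₁₁`, `y₂ ↦ 1`, `y₃ ↦ e₁₂`, `y₄ ↦ e₂₁`. -/

namespace Matrix

variable {n R : Type*} [DecidableEq n] [Fintype n] [Ring R]

theorem lie_single_diag_single_row_of_ne {i j : n} (h : i ≠ j) (c : R) :
    ⁅single i i (1 : R), single i j c⁆ = single i j c := by
  simp [Ring.lie_def, h.symm]

theorem lie_single_diag_single_col_of_ne {i j : n} (h : i ≠ j) (c : R) :
    ⁅single i i (1 : R), single j i c⁆ = -single j i c := by
  simp [Ring.lie_def, h]

end Matrix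

theorem Submodule.span_pair_self_add {R M : Type*} [Ring R] [AddCommGroup M] [Module R M]
    (x y : M) : span R {x, x + y} = span R {x, y} := by
  have hx {z : M} : x ∈ span R {x, z} := subset_span (Set.mem_insert _ _)
  have hz {z : M} : z ∈ span R {x, z} := subset_span (Set.mem_insert_of_mem _ rfl)
  apply le_antisymm <;> rw [span_le, Set.insert_subset_iff, Set.singleton_subset_iff]
  · exact ⟨hx, add_mem hx hz⟩
  · exact ⟨hx, by simpa using sub_mem (hz (z := x + y)) hx⟩

section

variable {K : Type*} [Field K]

theorem neg_lie_Egl_Egl_add_lie_Egl_Egl_eq_one [CharP K 3] :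
    -⁅(Egl 0 1 : Matrix (Fin 3) (Fin 3) K), (Egl 1 0 : Matrix (Fin 3) (Fin 3) K)⁆ +
      ⁅-(Egl 0 2 : Matrix (Fin 3) (Fin 3) K), (Egl 2 0 : Matrix (Fin 3) (Fin 3) K)⁆ = 1 := by
  have h3 : (3 : K) • Matrix.single (0 : Fin 3) (0 : Fin 3) (1 : K) = 0 := by
    rw [Matrix.smul_single, smul_eq_mul, mul_one,
      (by exact_mod_cast CharP.cast_eq_zero K 3 : (3 : K) = 0), Matrix.single_zero]
  simp only [Egl, Ring.lie_def, neg_mul, mul_neg, Matrix.single_mul_single_same, mul_one]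
  rw [← Matrix.sum_single_one, Fin.sum_univ_three]
  linear_combination (norm := module) -h3

theorem gBracket_apply (x y : Fin 4 → K) :
    gBracket K x y =
      ![0, x 2 * y 3 + x 3 * y 2, x 0 * y 2 - x 2 * y 0, x 3 * y 0 - x 0 * y 3] := by
  ext k
  fin_cases k <;>
    simp [gBracket, gCoef, Module.Basis.constr_apply_fintype, Fin.sum_univ_four] <;> ring

theorem oddPart_of (a b c d : K) : oddPart !![a, b; c, d] = !![0, b; c, 0] := by
  ext i j
  fin_cases i <;> fin_cases j <;> simp [oddPart]

def toGl11 (K : Type*) [Field K] : (Fin 4 → K) ≃ₗ[K] Matrix (Fin 2) (Fin 2) K where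
  toFun x := !![x 0 + x 1, x 2; x 3, x 1]
  invFun M := ![M 0 0 - M 1 1, M 1 1, M 0 1, M 1 0]
  map_add' x y := by ext i j; fin_cases i <;> fin_cases j <;> simp [add_add_add_comm]
  map_smul' c x := by ext i j; fin_cases i <;> fin_cases j <;> simp [mul_add]
  left_inv x := by ext k; fin_cases k <;> simp
  right_inv M := by ext i j; fin_cases i <;> fin_cases j <;> simp

theorem toGl11_apply (x : Fin 4 → K) : toGl11 K x = !![x 0 + x 1, x 2; x 3, x 1] := rfl

theorem toGl11_gBracket (x y : Fin 4 → K) :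
    toGl11 K (gBracket K x y) = glBracket (toGl11 K x) (toGl11 K y) := by
  rw [gBracket_apply, toGl11_apply, toGl11_apply, toGl11_apply, glBracket, oddPart_of, oddPart_of]
  ext i j
  fin_cases i <;> fin_cases j <;> simp <;> ring

theorem toGl11_single (k : Fin 4) : toGl11 K (Pi.single k 1) =
    ![Matrix.single 0 0 1, 1, Matrix.single 0 1 1, Matrix.single 1 0 1] k := by
  ext i j
  fin_cases k <;> fin_cases i <;> fin_cases j <;> simp [toGl11_apply]

theorem map_toGl11_span_even :
    (Submodule.span K {Pi.single 0 1, Pi.single 1 1}).map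
      (toGl11 K : (Fin 4 → K) →ₗ[K] Matrix (Fin 2) (Fin 2) K) =
      Submodule.span K {Matrix.single 0 0 (1 : K), Matrix.single 1 1 1} := by
  rw [Submodule.map_span, Set.image_pair, LinearEquiv.coe_coe, toGl11_single, toGl11_single,
    ← Matrix.sum_single_one, Fin.sum_univ_two]
  exact Submodule.span_pair_self_add _ _

theorem map_toGl11_span_odd :
    (Submodule.span K {Pi.single 2 1, Pi.single 3 1}).map
      (toGl11 K : (Fin 4 → K) →ₗ[K] Matrix (Fin 2) (Fin 2) K) =
      Submodule.span K {Matrix.single 0 1 (1 : K), Matrix.single 1 0 1} := by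
  rw [Submodule.map_span, Set.image_pair, LinearEquiv.coe_coe, toGl11_single, toGl11_single]
  rfl

end

theorem stmt8_general {K : Type*} [Field K] [CharP K 3] :
    (⁅(Egl 0 0 : Matrix (Fin 3) (Fin 3) K), (1 : Matrix (Fin 3) (Fin 3) K)⁆ =
      (0 : Matrix (Fin 3) (Fin 3) K)) ∧
    (⁅(Egl 0 0 : Matrix (Fin 3) (Fin 3) K), Egl 0 1⁆ = (Egl 0 1 : Matrix (Fin 3) (Fin 3) K)) ∧
    (⁅(Egl 0 0 : Matrix (Fin 3) (Fin 3) K), -Egl 0 2⁆ =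
      (-Egl 0 2 : Matrix (Fin 3) (Fin 3) K)) ∧
    (⁅(Egl 0 0 : Matrix (Fin 3) (Fin 3) K), Egl 2 0⁆ = (-Egl 2 0 : Matrix (Fin 3) (Fin 3) K)) ∧
    (⁅(Egl 0 0 : Matrix (Fin 3) (Fin 3) K), Egl 1 0⁆ = (-Egl 1 0 : Matrix (Fin 3) (Fin 3) K)) ∧
    (-⁅(Egl 0 1 : Matrix (Fin 3) (Fin 3) K), Egl 1 0⁆ + ⁅(-Egl 0 2 : Matrix (Fin 3) (Fin 3) K),
        Egl 2 0⁆ = (1 : Matrix (Fin 3) (Fin 3) K)) ∧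
    (∃ φ : (Fin 4 → K) ≃ₗ[K] Matrix (Fin 2) (Fin 2) K,
      (∀ x y : Fin 4 → K, φ (gBracket K x y) = glBracket (φ x) (φ y)) ∧
      Submodule.map (φ : (Fin 4 → K) →ₗ[K] Matrix (Fin 2) (Fin 2) K)
          (Submodule.span K {Pi.single 0 1, Pi.single 1 1}) =
        Submodule.span K {Matrix.single 0 0 (1 : K), Matrix.single 1 1 1} ∧
      Submodule.map (φ : (Fin 4 → K) →ₗ[K] Matrix (Fin 2) (Fin 2) K)
          (Submodule.span K {Pi.single 2 1, Pi.single 3 1}) =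
        Submodule.span K {Matrix.single 0 1 (1 : K), Matrix.single 1 0 1}) := by
  refine ⟨(Commute.one_right _).lie_eq, Matrix.lie_single_diag_single_row_of_ne (by decide) 1, ?_,
    Matrix.lie_single_diag_single_col_of_ne (by decide) 1,
    Matrix.lie_single_diag_single_col_of_ne (by decide) 1, neg_lie_Egl_Egl_add_lie_Egl_Egl_eq_one,
    toGl11 K, toGl11_gBracket, map_toGl11_span_even, map_toGl11_span_odd⟩
  simpa [Egl, Matrix.single_neg] using
    Matrix.lie_single_diag_single_row_of_ne (show (0 : Fin 3) ≠ 2 by decide) (-1 : K)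

/-- For the semisimplification of `gl_3` in characteristic 3 with respect to `d = ad(e_{23})`,
with `y_1 = [e_{11}]`, `y_2 = [e_{11}+e_{22}+e_{33}]` even and `y_3 = [e_{12} ↦ -e_{13}]`,
`y_4 = [e_{31} ↦ e_{21}]` odd, the semisimplified brackets are `[y_1,y_2] = 0`,
`[y_1,y_3] = y_3`, `[y_1,y_4] = -y_4` and `[y_3,y_4] = y_2` (the odd-odd bracket being
computed by the rule `[x̄,ȳ] = -[x,y'] + [x',y]`); these are witnessed by the displayed
identities in `gl_3` (0-based indices).  In particular the resulting Lie superalgebra,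
which has exactly these structure constants, is isomorphic to `gl(1|1)`. -/
theorem stmt8 {K : Type*} [Field K] [IsAlgClosed K] [CharP K 3] :
    (⁅(Egl 0 0 : Matrix (Fin 3) (Fin 3) K), (1 : Matrix (Fin 3) (Fin 3) K)⁆ =
      (0 : Matrix (Fin 3) (Fin 3) K)) ∧
    (⁅(Egl 0 0 : Matrix (Fin 3) (Fin 3) K), Egl 0 1⁆ = (Egl 0 1 : Matrix (Fin 3) (Fin 3) K)) ∧
    (⁅(Egl 0 0 : Matrix (Fin 3) (Fin 3) K), -Egl 0 2⁆ =
      (-Egl 0 2 : Matrix (Fin 3) (Fin 3) K)) ∧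
    (⁅(Egl 0 0 : Matrix (Fin 3) (Fin 3) K), Egl 2 0⁆ = (-Egl 2 0 : Matrix (Fin 3) (Fin 3) K)) ∧
    (⁅(Egl 0 0 : Matrix (Fin 3) (Fin 3) K), Egl 1 0⁆ = (-Egl 1 0 : Matrix (Fin 3) (Fin 3) K)) ∧
    (-⁅(Egl 0 1 : Matrix (Fin 3) (Fin 3) K), Egl 1 0⁆ + ⁅(-Egl 0 2 : Matrix (Fin 3) (Fin 3) K),
        Egl 2 0⁆ = (1 : Matrix (Fin 3) (Fin 3) K)) ∧
    (∃ φ : (Fin 4 → K) ≃ₗ[K] Matrix (Fin 2) (Fin 2) K,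
      (∀ x y : Fin 4 → K, φ (gBracket K x y) = glBracket (φ x) (φ y)) ∧
      Submodule.map (φ : (Fin 4 → K) →ₗ[K] Matrix (Fin 2) (Fin 2) K)
          (Submodule.span K {Pi.single 0 1, Pi.single 1 1}) =
        Submodule.span K {Matrix.single 0 0 (1 : K), Matrix.single 1 1 1} ∧
      Submodule.map (φ : (Fin 4 → K) →ₗ[K] Matrix (Fin 2) (Fin 2) K)
          (Submodule.span K {Pi.single 2 1, Pi.single 3 1}) =
        Submodule.span K {Matrix.single 0 1 (1 : K), Matrix.single 1 0 1}) :=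
  stmt8_general
end

section
/- Let g be a Kac–Moody-type Lie algebra over a field of characteristic 3 with Chevalley generators satisfying the Serre relations, and suppose indices i, i+l with a_{i,i+l} = a_{i+l,i} = -1, a_{ii} = a_{i+l,i+l} = 2. Setting e = e_i, one has [[e_i, e_{i+l}], [f_i, f_{i+l}]] = -(h_{i+l} + h_i), and hence in the semisimplification the odd generators ẽ = (e_{i+l} ↦ [e, e_{i+l}]) and f̃ = ([f, f_{i+l}] ↦ f_{i+l}) satisfy [ẽ, f̃] = h_{i+l} - h_i (using -[e_{i+l}, f_{i+l}] + [[e,e_{i+l}],[f,f_{i+l}]] = -h_{i+l} - h_{i+l} - h_i = h_{i+l} - h_i mod 3). -/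
/-- In a Kac–Moody-type Lie algebra over a field of characteristic 3 with Chevalley
generators satisfying the contragredient relations, for indices `a = i` and `b = i+l` with
`A a b = A b a = -1` and `A a a = A b b = 2`, one has
`[[e_a, e_b], [f_a, f_b]] = -(h_b + h_a)`, and hence
`-[e_b, f_b] + [[e_a, e_b], [f_a, f_b]] = -h_b - h_b - h_a = h_b - h_a` mod 3 (this is the
semisimplified bracket `[ẽ, f̃]` of the odd generators `ẽ = (e_b ↦ [e_a, e_b])` and
`f̃ = ([f_a, f_b] ↦ f_b)`). -/
theorem stmt14 {K L : Type*} [Field K] [CharP K 3] [LieRing L] [LieAlgebra K L]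
    {n : ℕ} (A : Fin n → Fin n → ℤ) (E F H : Fin n → L)
    (hEF : ∀ a b, ⁅E a, F b⁆ = if a = b then H a else 0)
    (hHE : ∀ a b, ⁅H a, E b⁆ = ((A a b : ℤ) : K) • E b)
    (hHF : ∀ a b, ⁅H a, F b⁆ = -(((A a b : ℤ) : K) • F b))
    (a b : Fin n) (hab : a ≠ b)
    (hAab : A a b = -1) (hAba : A b a = -1) (hAaa : A a a = 2) (hAbb : A b b = 2) :
    (⁅⁅E a, E b⁆, ⁅F a, F b⁆⁆ = -(H b + H a)) ∧
    (-⁅E b, F b⁆ + ⁅⁅E a, E b⁆, ⁅F a, F b⁆⁆ = H b - H a) := by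
  have hEbFa : ⁅E b, F a⁆ = 0 := by rw [hEF]; simp [hab.symm]
  have hEaFb : ⁅E a, F b⁆ = 0 := by rw [hEF]; simp [hab]
  have hEaFa : ⁅E a, F a⁆ = H a := by rw [hEF]; simp
  have hEbFb : ⁅E b, F b⁆ = H b := by rw [hEF]; simp
  have h1 : ⁅E b, ⁅F a, F b⁆⁆ = -F a := by
    rw [leibniz_lie, hEbFa, hEbFb, zero_lie, zero_add, ← lie_skew, hHF, hAba]
    push_cast; simp
  have h2 : ⁅E a, ⁅F a, F b⁆⁆ = F b := by
    rw [leibniz_lie, hEaFa, hEaFb, lie_zero, add_zero, hHF, hAab]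
    push_cast; simp
  have key : ⁅⁅E a, E b⁆, ⁅F a, F b⁆⁆ = -(H b + H a) := by
    rw [lie_lie, h1, h2, hEbFb, lie_neg, hEaFa]
    abel
  refine ⟨key, ?_⟩
  rw [key, hEbFb]
  have h3 : (3 : K) • H b = 0 := by
    have : (3 : K) = 0 := by exact_mod_cast CharP.cast_eq_zero K 3
    rw [this, zero_smul]
  have h3' : H b + H b + H b = 0 := by
    have := h3
    rw [show (3 : K) = ((3 : ℕ) : K) by norm_num, Nat.cast_smul_eq_nsmul] at this
    simpa [succ_nsmul, add_assoc] using this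
  calc -H b + -(H b + H a) = (H b - H a) - (H b + H b + H b) := by abel
    _ = H b - H a := by rw [h3', sub_zero]
end
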